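/- arXiv:math/0407231 — 3 statements merged into one kernel-verified Lean document; each statement's English description precedes it below -/
import Mathlib

section
/- Let Γ be a group acting on a topological space X with compact quotient X/Γ, let φ : X → ℝ_{>0} be continuous, and let χ : Γ → ℝ_{>0} be an injective group homomorphism with φ(γ·x) = χ(γ)·φ(x) for all γ, x. If the image of χ is discrete in ℝ_{>0}, then φ is a proper map. -/
/-!
Pick a compact set `C` meeting every `Γ`-orbit. If `φ x ∈ K` and `g • x ∈ C`, then
`χ g = φ (g • x) / φ x` lies in the compact set `φ '' C / K` of `ℝ_{>0}`; as `χ` is injective with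
discrete image, only finitely many `g` qualify. Hence `φ ⁻¹' K` is a closed subset of the compact
set `⋃ g ∈ F, g⁻¹ • C` for a finite `F ⊆ Γ`.
-/

open Set Function Pointwise

theorem IsOpenMap.exists_isCompact_image_eq_univ {X Y : Type*} [TopologicalSpace X]
    [WeaklyLocallyCompactSpace X] [TopologicalSpace Y] [CompactSpace Y] {f : X → Y}
    (hf : IsOpenMap f) (hsurj : Surjective f) : ∃ C : Set X, IsCompact C ∧ f '' C = univ := by
  choose U hUc hU using fun x : X ↦ exists_compact_mem_nhds x
  obtain ⟨s, hs⟩ := isCompact_univ.elim_finite_subcover (fun x ↦ f '' interior (U x))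
    (fun x ↦ hf _ isOpen_interior) fun y _ ↦ by
      obtain ⟨x, rfl⟩ := hsurj y
      exact mem_iUnion.2 ⟨x, mem_image_of_mem f (mem_interior_iff_mem_nhds.2 (hU x))⟩
  refine ⟨⋃ x ∈ s, U x, s.isCompact_biUnion fun x _ ↦ hUc x, eq_univ_of_univ_subset fun y hy ↦ ?_⟩
  obtain ⟨x, hx, hyx⟩ := mem_iUnion₂.1 (hs hy)
  exact image_mono (subset_biUnion_of_mem (u := U) hx) (image_mono interior_subset hyx)

theorem MulAction.exists_isCompact_forall_exists_smul_mem (Γ X : Type*) [TopologicalSpace X]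
    [WeaklyLocallyCompactSpace X] [Group Γ] [MulAction Γ X] [ContinuousConstSMul Γ X]
    [CompactSpace (Quotient (orbitRel Γ X))] :
    ∃ C : Set X, IsCompact C ∧ ∀ x : X, ∃ g : Γ, g • x ∈ C := by
  obtain ⟨C, hC, hCorbits⟩ := (isOpenMap_quotient_mk'_mul (Γ := Γ) (T := X)
    ).exists_isCompact_image_eq_univ Quotient.mk_surjective
  refine ⟨C, hC, fun x ↦ ?_⟩
  obtain ⟨y, hy, hyx⟩ := hCorbits.ge (mem_univ (Quotient.mk _ x))
  obtain ⟨g, rfl⟩ := Quotient.exact hyx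
  exact ⟨g, hy⟩

theorem Units.isCompact_preimage_val {G₀ : Type*} [GroupWithZero G₀] [TopologicalSpace G₀]
    [ContinuousInv₀ G₀] {K : Set G₀} (hK : IsCompact K) (h0 : (0 : G₀) ∉ K) :
    IsCompact (Units.val ⁻¹' K : Set G₀ˣ) := by
  rw [Units.isEmbedding_val₀.isCompact_iff, image_preimage_eq_of_subset]
  · exact hK
  · exact fun x hx ↦ ⟨Units.mk0 x (ne_of_mem_of_not_mem hx h0), rfl⟩

theorem isCompact_preimage_of_map_smul_eq_mul {X Γ G : Type*} [TopologicalSpace X]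
    [WeaklyLocallyCompactSpace X] [Group Γ] [MulAction Γ X] [ContinuousConstSMul Γ X]
    [CompactSpace (Quotient (MulAction.orbitRel Γ X))] [Group G] [TopologicalSpace G]
    [IsTopologicalGroup G] [T2Space G] {ψ : X → G} (hψ : Continuous ψ) {χ : Γ →* G}
    (hχinj : Injective χ) (hχdisc : IsDiscrete (χ.range : Set G))
    (hequiv : ∀ (g : Γ) (x : X), ψ (g • x) = χ g * ψ x) {L : Set G} (hL : IsCompact L) :
    IsCompact (ψ ⁻¹' L) := by
  obtain ⟨C, hC, hCorbits⟩ := MulAction.exists_isCompact_forall_exists_smul_mem Γ X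
  have hF : (χ ⁻¹' (ψ '' C * L⁻¹)).Finite :=
    tendsto_cofinite_cocompact_iff.1 (χ.tendsto_coe_cofinite_of_discrete hχinj hχdisc) _
      ((hC.image hψ).mul hL.inv)
  refine (hF.isCompact_biUnion fun g _ ↦ hC.image (continuous_const_smul g⁻¹)).of_isClosed_subset
    (hL.isClosed.preimage hψ) fun x hx ↦ ?_
  obtain ⟨g, hg⟩ := hCorbits x
  have hχg : χ g = ψ (g • x) * (ψ x)⁻¹ := by rw [hequiv, mul_inv_cancel_right]
  refine mem_iUnion₂.2 ⟨g, ?_, g • x, hg, inv_smul_smul g x⟩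
  rw [mem_preimage, hχg]
  exact mul_mem_mul (mem_image_of_mem ψ hg) (inv_mem_inv.2 hx)

theorem stmt3_general {X : Type*} [TopologicalSpace X] [LocallyCompactSpace X]
    {Γ : Type*} [Group Γ] [MulAction Γ X] [ContinuousConstSMul Γ X]
    (hcpt : CompactSpace (Quotient (MulAction.orbitRel Γ X)))
    (φ : X → ℝ) (hφpos : ∀ x, 0 < φ x) (hφc : Continuous φ)
    (χ : Γ →* ℝˣ) (hχinj : Function.Injective χ)
    (hequiv : ∀ (g : Γ) (x : X), φ (g • x) = (χ g : ℝˣ) * φ x)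
    (hdisc : DiscreteTopology χ.range) :
    ∀ K : Set ℝ, K ⊆ Set.Ioi 0 → IsCompact K → IsCompact (φ ⁻¹' K) := by
  intro K hKpos hK
  let ψ : X → ℝˣ := fun x ↦ Units.mk0 (φ x) (hφpos x).ne'
  have hψ : Continuous ψ :=
    Units.continuous_iff.2 ⟨hφc, hφc.inv₀ fun x ↦ (hφpos x).ne'⟩
  exact isCompact_preimage_of_map_smul_eq_mul hψ hχinj (isDiscrete_iff_discreteTopology.2 hdisc)
    (fun g x ↦ Units.ext (hequiv g x))
    (Units.isCompact_preimage_val hK fun h ↦ lt_irrefl (0 : ℝ) (hKpos h))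

/-- If `Γ` acts cocompactly on `X`, `φ` is continuous positive and equivariant via an
injective character `χ : Γ → ℝ_{>0}` with discrete image, then `φ` is proper as a map
to `ℝ_{>0}`. -/
theorem stmt3 {X : Type*} [TopologicalSpace X] [LocallyCompactSpace X] [T2Space X]
    {Γ : Type*} [Group Γ] [MulAction Γ X] [ContinuousConstSMul Γ X]
    (hfree : ∀ (g : Γ) (x : X), g • x = x → g = 1)
    (hpd : ∀ K : Set X, IsCompact K → {g : Γ | ((g • ·) '' K ∩ K).Nonempty}.Finite)
    (hcpt : CompactSpace (Quotient (MulAction.orbitRel Γ X)))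
    (φ : X → ℝ) (hφpos : ∀ x, 0 < φ x) (hφc : Continuous φ)
    (χ : Γ →* ℝˣ) (hχpos : ∀ g, (0 : ℝ) < (χ g : ℝˣ)) (hχinj : Function.Injective χ)
    (hequiv : ∀ (g : Γ) (x : X), φ (g • x) = (χ g : ℝˣ) * φ x)
    (hdisc : DiscreteTopology χ.range) :
    ∀ K : Set ℝ, K ⊆ Set.Ioi 0 → IsCompact K → IsCompact (φ ⁻¹' K) :=
  stmt3_general hcpt φ hφpos hφc χ hχinj hequiv hdisc
end

section
/- Let A : ℂⁿ → ℂⁿ be an invertible linear operator with all eigenvalues of absolute value strictly less than 1. Then the cyclic group ⟨A⟩ acts freely and properly discontinuously on ℂⁿ \ {0}, and the quotient (ℂⁿ \ {0})/⟨A⟩ is a compact Hausdorff space. -/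
/-!
By Gelfand's formula `‖Aᵐ‖ → 0`. If `K, L ⊆ ℂⁿ \ {0}` are compact, their norms lie in some
`[r, R]` with `r > 0`, and `Aᵏ K` can only meet `L` when `r ≤ ‖A^|k|‖ R`, which holds for finitely
many `k`: the action of `⟨A⟩` on `ℂⁿ \ {0}` is properly discontinuous. Freeness, the disjoint
translates of a neighbourhood and the Hausdorff property of the quotient follow from this. Every
orbit meets the compact annulus `1 ≤ ‖A⁻¹‖ ‖x‖, ‖x‖ ≤ 1` (at the least `k` with `‖Aᵏ x‖ ≤ 1`),
so the quotient is compact.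
-/

open Filter Topology

/-- The relation identifying points of `ℂⁿ \ {0}` in one orbit of the cyclic group
generated by an invertible linear operator `A`. -/
def hopfSetoid {n : ℕ} (A : (Fin n → ℂ) ≃L[ℂ] (Fin n → ℂ)) :
    Setoid {x : Fin n → ℂ // x ≠ 0} where
  r x y := ∃ k : ℤ, (A ^ k) x.1 = y.1
  iseqv := by
    constructor
    · intro x; exact ⟨0, by rw [zpow_zero]; rfl⟩
    · rintro x y ⟨k, hk⟩
      exact ⟨-k, by rw [← hk, zpow_neg]; exact (A ^ k).symm_apply_apply x.1⟩
    · rintro x y w ⟨k, hk⟩ ⟨l, hl⟩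
      exact ⟨l + k, by rw [← hl, ← hk, zpow_add]; rfl⟩

section Spectral
variable {𝔸 : Type*} [NormedRing 𝔸] [NormedAlgebra ℂ 𝔸] [CompleteSpace 𝔸]

theorem spectralRadius_lt_one_of_forall_norm_lt_one {a : 𝔸}
    (h : ∀ μ ∈ spectrum ℂ a, ‖μ‖ < 1) : spectralRadius ℂ a < 1 := by
  rcases (spectrum ℂ a).eq_empty_or_nonempty with hσ | hσ
  · simp [spectralRadius, hσ]
  · exact_mod_cast spectrum.spectralRadius_lt_of_forall_lt_of_nonempty hσ (r := 1)
      fun μ hμ ↦ by exact_mod_cast h μ hμ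

theorem tendsto_norm_pow_atTop_nhds_zero_of_spectralRadius_lt_one {a : 𝔸}
    (h : spectralRadius ℂ a < 1) : Tendsto (fun m : ℕ ↦ ‖a ^ m‖) atTop (𝓝 0) := by
  obtain ⟨r, hρr, hr1⟩ := ENNReal.lt_iff_exists_nnreal_btwn.mp h
  have hr : Tendsto (fun m : ℕ ↦ (r : ℝ) ^ m) atTop (𝓝 0) :=
    tendsto_pow_atTop_nhds_zero_of_lt_one r.coe_nonneg (by exact_mod_cast hr1)
  refine squeeze_zero' (.of_forall fun m ↦ norm_nonneg _) ?_ hr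
  have hgelfand := spectrum.pow_nnnorm_pow_one_div_tendsto_nhds_spectralRadius a
  filter_upwards [hgelfand.eventually_lt_const hρr, eventually_gt_atTop 0] with m hm hm0
  rw [one_div, ENNReal.rpow_inv_lt_iff (by positivity), ENNReal.rpow_natCast, ← ENNReal.coe_pow,
    ENNReal.coe_lt_coe] at hm
  exact_mod_cast hm.le
end Spectral

namespace ContinuousLinearEquiv
variable {R M : Type*} [Semiring R] [TopologicalSpace M] [AddCommMonoid M] [Module R M]

instance : MulAction (M ≃L[R] M) {x : M // x ≠ 0} where
  smul A x := ⟨A x, by simpa using x.2⟩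
  one_smul _ := rfl
  mul_smul _ _ _ := rfl

instance : ContinuousConstSMul (M ≃L[R] M) {x : M // x ≠ 0} :=
  ⟨fun A ↦ (A.continuous.comp continuous_subtype_val).subtype_mk _⟩

theorem coe_pow (A : M ≃L[R] M) (m : ℕ) :
    ((A ^ m : M ≃L[R] M) : M →L[R] M) = (A : M →L[R] M) ^ m := by
  induction m with
  | zero => rfl
  | succ m ih => rw [pow_succ, pow_succ, ← ih]; rfl

end ContinuousLinearEquiv

instance {G α : Type*} [Group G] [TopologicalSpace α] [MulAction G α] [ContinuousConstSMul G α]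
    (S : Subgroup G) : ContinuousConstSMul S α :=
  ⟨fun g ↦ continuous_const_smul (g : G)⟩

instance {X : Type*} [TopologicalSpace X] [LocallyCompactSpace X] [T1Space X] (a : X) :
    LocallyCompactSpace {x : X // x ≠ a} :=
  isOpen_ne.isOpenEmbedding_subtypeVal.locallyCompactSpace

theorem IsClosed.exists_pos_forall_le_norm {E : Type*} [SeminormedAddCommGroup E] {S : Set E}
    (hS : IsClosed S) (h0 : 0 ∉ S) : ∃ r > 0, ∀ x ∈ S, r ≤ ‖x‖ := by
  obtain ⟨r, hr, hrS⟩ := Metric.mem_nhds_iff.mp (hS.isOpen_compl.mem_nhds h0)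
  exact ⟨r, hr, fun x hx ↦ not_lt.mp fun hlt ↦ hrS (mem_ball_zero_iff.mpr hlt) hx⟩

namespace ContinuousLinearEquiv
variable {𝕜 E : Type*} [NontriviallyNormedField 𝕜] [NormedAddCommGroup E] [NormedSpace 𝕜 E]

theorem norm_zpow_natCast_apply_le (A : E ≃L[𝕜] E) (m : ℕ) (x : E) :
    ‖(A ^ (m : ℤ)) x‖ ≤ ‖(A : E →L[𝕜] E) ^ m‖ * ‖x‖ := by
  rw [zpow_natCast, ← coe_pow]
  exact ((A ^ m : E ≃L[𝕜] E) : E →L[𝕜] E).le_opNorm x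

theorem norm_le_norm_pow_mul_norm_zpow_neg_apply (A : E ≃L[𝕜] E) (m : ℕ) (x : E) :
    ‖x‖ ≤ ‖(A : E →L[𝕜] E) ^ m‖ * ‖(A ^ (-(m : ℤ))) x‖ := by
  have h : (A ^ (m : ℤ)) ((A ^ (-(m : ℤ))) x) = x := by
    change (A ^ (m : ℤ) * A ^ (-(m : ℤ))) x = x
    rw [zpow_neg, mul_inv_cancel]
    rfl
  simpa only [h] using A.norm_zpow_natCast_apply_le m ((A ^ (-(m : ℤ))) x)

variable {A : E ≃L[𝕜] E} (hA : Tendsto (fun m : ℕ ↦ ‖(A : E →L[𝕜] E) ^ m‖) atTop (𝓝 0))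
include hA

theorem finite_setOf_le_norm_pow {c : ℝ} (hc : 0 < c) :
    {m : ℕ | c ≤ ‖(A : E →L[𝕜] E) ^ m‖}.Finite := by
  have h : ∀ᶠ m in cofinite, ‖(A : E →L[𝕜] E) ^ m‖ < c :=
    Nat.cofinite_eq_atTop ▸ hA.eventually (gt_mem_nhds hc)
  exact (eventually_cofinite.mp h).subset fun m hm ↦ not_lt.mpr hm

theorem finite_setOf_image_zpow_inter_nonempty {K L : Set E} (hK : IsCompact K)
    (hL : IsCompact L) (hK0 : (0 : E) ∉ K) (hL0 : (0 : E) ∉ L) :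
    {k : ℤ | ((A ^ k) '' K ∩ L).Nonempty}.Finite := by
  obtain ⟨r, hr, hr_le⟩ := (hK.union hL).isClosed.exists_pos_forall_le_norm (by simp [hK0, hL0])
  obtain ⟨R, hR, hle_R⟩ := (hK.union hL).isBounded.exists_pos_norm_le
  have hS := finite_setOf_le_norm_pow hA (div_pos hr hR)
  refine ((hS.image Nat.cast).union (hS.image fun m : ℕ ↦ -(m : ℤ))).subset ?_
  rintro k ⟨_, ⟨x, hx, rfl⟩, hy⟩
  obtain ⟨m, rfl | rfl⟩ := Int.eq_nat_or_neg k
  · refine .inl ⟨m, ?_, rfl⟩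
    rw [Set.mem_ofPred_eq, div_le_iff₀ hR]
    calc r ≤ ‖(A ^ (m : ℤ)) x‖ := hr_le _ (.inr hy)
      _ ≤ ‖(A : E →L[𝕜] E) ^ m‖ * ‖x‖ := A.norm_zpow_natCast_apply_le m x
      _ ≤ ‖(A : E →L[𝕜] E) ^ m‖ * R := by gcongr; exact hle_R x (.inl hx)
  · refine .inr ⟨m, ?_, rfl⟩
    rw [Set.mem_ofPred_eq, div_le_iff₀ hR]
    calc r ≤ ‖x‖ := hr_le x (.inl hx)
      _ ≤ ‖(A : E →L[𝕜] E) ^ m‖ * ‖(A ^ (-(m : ℤ))) x‖ :=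
        A.norm_le_norm_pow_mul_norm_zpow_neg_apply m x
      _ ≤ ‖(A : E →L[𝕜] E) ^ m‖ * R := by gcongr; exact hle_R _ (.inr hy)

theorem eq_zero_of_zpow_apply_eq_self {k : ℤ} {x : E} (hx : x ≠ 0) (hkx : (A ^ k) x = x) :
    k = 0 := by
  by_contra hk
  have hfix : ∀ j : ℕ, (A ^ (k * j)) x = x := fun j ↦ by
    rw [zpow_mul, zpow_natCast]
    induction j with
    | zero => rfl
    | succ j ih => rw [pow_succ]; exact (congrArg _ hkx).trans ih
  have hx' : (0 : E) ∉ ({x} : Set E) := by simpa [eq_comm] using hx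
  refine Set.not_infinite.mpr (finite_setOf_image_zpow_inter_nonempty hA isCompact_singleton
    isCompact_singleton hx' hx') (Set.infinite_of_injective_forall_mem
      ((mul_right_injective₀ hk).comp Nat.cast_injective) fun j ↦ ?_)
  exact ⟨x, ⟨x, rfl, hfix j⟩, rfl⟩

theorem tendsto_norm_zpow_natCast_apply (x : E) :
    Tendsto (fun m : ℕ ↦ ‖(A ^ (m : ℤ)) x‖) atTop (𝓝 0) :=
  squeeze_zero (fun _ ↦ norm_nonneg _) (fun m ↦ A.norm_zpow_natCast_apply_le m x)
    (by simpa using hA.mul_const ‖x‖)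

theorem tendsto_norm_zpow_neg_natCast_apply {x : E} (hx : x ≠ 0) :
    Tendsto (fun m : ℕ ↦ ‖(A ^ (-(m : ℤ))) x‖) atTop atTop := by
  refine tendsto_atTop.mpr fun C ↦ ?_
  have hsmall : ∀ᶠ m : ℕ in atTop, ‖(A : E →L[𝕜] E) ^ m‖ * max C 1 < ‖x‖ :=
    (zero_mul (max C 1) ▸ hA.mul_const (max C 1)).eventually
      (gt_mem_nhds (norm_pos_iff.mpr hx))
  filter_upwards [hsmall] with m hm
  by_contra! hlt
  refine (A.norm_le_norm_pow_mul_norm_zpow_neg_apply m x).not_gt (lt_of_le_of_lt ?_ hm)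
  gcongr
  exact hlt.le.trans (le_max_left _ _)

theorem exists_zpow_apply_mem_annulus {x : E} (hx : x ≠ 0) :
    ∃ k : ℤ, ‖(A ^ k) x‖ ≤ 1 ∧ 1 ≤ ‖(A.symm : E →L[𝕜] E)‖ * ‖(A ^ k) x‖ := by
  obtain ⟨N, hN⟩ := eventually_atTop.mp
    ((tendsto_norm_zpow_neg_natCast_apply hA hx).eventually_gt_atTop 1)
  obtain ⟨m, hm⟩ :=
    ((tendsto_norm_zpow_natCast_apply hA x).eventually (ge_mem_nhds one_pos)).exists
  have hbdd : ∀ k : ℤ, ‖(A ^ k) x‖ ≤ 1 → -(N : ℤ) ≤ k := fun k hk ↦ by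
    by_contra! hkN
    obtain ⟨m, rfl⟩ : ∃ m : ℕ, k = -(m : ℤ) := ⟨(-k).toNat, by omega⟩
    exact (hN m (by omega)).not_ge hk
  obtain ⟨k, hk, hk_least⟩ := Int.exists_least_of_bdd ⟨_, hbdd⟩ ⟨m, hm⟩
  refine ⟨k, hk, ?_⟩
  have hprev : 1 < ‖(A ^ (k - 1)) x‖ := not_le.mp fun h ↦ by linarith [hk_least _ h]
  have hstep : (A ^ (k - 1)) x = A.symm ((A ^ k) x) := by
    rw [show k - 1 = -1 + k by ring, zpow_add, zpow_neg_one]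
    rfl
  exact hprev.le.trans (hstep ▸ (A.symm : E →L[𝕜] E).le_opNorm _)

theorem properlyDiscontinuousSMul_zpowers :
    ProperlyDiscontinuousSMul (Subgroup.zpowers A) {x : E // x ≠ 0} where
  finite_disjoint_inter_image {K L} hK hL := by
    have hS := finite_setOf_image_zpow_inter_nonempty hA (Subtype.isCompact_iff.mp hK)
      (Subtype.isCompact_iff.mp hL) (by simp) (by simp)
    refine (hS.image fun k ↦ (⟨A ^ k, k, rfl⟩ : Subgroup.zpowers A)).subset ?_
    rintro ⟨_, k, rfl⟩ ⟨_, ⟨x, hx, rfl⟩, hy⟩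
    exact ⟨k, ⟨_, ⟨x, ⟨x, hx, rfl⟩, rfl⟩, ⟨_, hy, rfl⟩⟩, rfl⟩

variable [ProperSpace E]

theorem exists_nhds_disjoint_image_zpow {x : E} (hx : x ≠ 0) :
    ∃ U ∈ 𝓝 x, ∀ k : ℤ, k ≠ 0 → Disjoint ((A ^ k) '' U) U := by
  have := properlyDiscontinuousSMul_zpowers hA
  obtain ⟨U, hU, hdisj⟩ := ProperlyDiscontinuousSMul.exists_nhds_disjoint_image
    (Subgroup.zpowers A) (⟨x, hx⟩ : {x : E // x ≠ 0})
  refine ⟨Subtype.val '' U, isOpen_ne.isOpenEmbedding_subtypeVal.image_mem_nhds.mpr hU,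
    fun k hk ↦ ?_⟩
  let g : Subgroup.zpowers A := ⟨A ^ k, k, rfl⟩
  have hg : g • (⟨x, hx⟩ : {x : E // x ≠ 0}) ≠ ⟨x, hx⟩ := fun h ↦
    hk (eq_zero_of_zpow_apply_eq_self hA hx (congrArg Subtype.val h))
  have := (Set.disjoint_image_iff Subtype.val_injective).mpr (hdisj g hg)
  rw [Set.image_image] at this ⊢
  exact this

theorem compactSpace_quotient_orbitRel_zpowers :
    CompactSpace (Quotient (MulAction.orbitRel (Subgroup.zpowers A) {x : E // x ≠ 0})) := by
  set K : Set E := {y | ‖y‖ ≤ 1 ∧ 1 ≤ ‖(A.symm : E →L[𝕜] E)‖ * ‖y‖}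
  have hK_sub : K ⊆ Set.range (Subtype.val : {x : E // x ≠ 0} → E) := fun y hy ↦
    ⟨⟨y, fun h ↦ by norm_num [K, h] at hy⟩, rfl⟩
  have hK : IsCompact (Subtype.val ⁻¹' K : Set {x : E // x ≠ 0}) := by
    refine (Topology.IsInducing.subtypeVal.isCompact_preimage_iff hK_sub).mpr ?_
    refine Metric.isCompact_of_isClosed_isBounded ?_ ?_
    · exact (isClosed_le continuous_norm continuous_const).inter
        (isClosed_le continuous_const (continuous_const.mul continuous_norm))
    · exact (Metric.isBounded_closedBall (x := (0 : E)) (r := 1)).subset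
        fun y hy ↦ mem_closedBall_zero_iff.mpr hy.1
  refine ⟨Set.eq_univ_of_forall (fun q ↦ ?_) ▸ hK.image continuous_quotient_mk'⟩
  induction q using Quotient.inductionOn with | h x =>
  obtain ⟨k, hk⟩ := exists_zpow_apply_mem_annulus hA x.2
  let g : Subgroup.zpowers A := ⟨A ^ k, k, rfl⟩
  exact ⟨g • x, hk, Quotient.sound (MulAction.mem_orbit x g)⟩

end ContinuousLinearEquiv

theorem hopfSetoid_eq_orbitRel {n : ℕ} (A : (Fin n → ℂ) ≃L[ℂ] (Fin n → ℂ)) :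
    hopfSetoid A = MulAction.orbitRel (Subgroup.zpowers A) {x : Fin n → ℂ // x ≠ 0} := by
  refine Setoid.ext fun x y ↦ (hopfSetoid A).comm'.trans ?_
  rw [MulAction.orbitRel_apply, MulAction.mem_orbit_iff, Subgroup.exists_zpowers]
  simp only [Subtype.ext_iff]
  rfl

/-- `⟨A⟩` acts freely and properly discontinuously on `ℂⁿ \ {0}`, and the quotient
(the linear Hopf manifold) is compact Hausdorff. -/
theorem stmt9 {n : ℕ} (A : (Fin n → ℂ) ≃L[ℂ] (Fin n → ℂ))
    (hspec : ∀ μ ∈ spectrum ℂ (A : (Fin n → ℂ) →L[ℂ] (Fin n → ℂ)), ‖μ‖ < 1) :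
    (∀ (k : ℤ) (x : Fin n → ℂ), x ≠ 0 → (A ^ k) x = x → k = 0) ∧
    (∀ x : Fin n → ℂ, x ≠ 0 → ∃ U ∈ nhds x,
      ∀ k : ℤ, k ≠ 0 → Disjoint ((A ^ k) '' U) U) ∧
    CompactSpace (Quotient (hopfSetoid A)) ∧ T2Space (Quotient (hopfSetoid A)) := by
  have hA := tendsto_norm_pow_atTop_nhds_zero_of_spectralRadius_lt_one
    (spectralRadius_lt_one_of_forall_norm_lt_one hspec)
  have := A.properlyDiscontinuousSMul_zpowers hA
  rw [hopfSetoid_eq_orbitRel]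
  exact ⟨fun k x hx ↦ A.eq_zero_of_zpow_apply_eq_self hA hx,
    fun x hx ↦ A.exists_nhds_disjoint_image_zpow hA hx,
    A.compactSpace_quotient_orbitRel_zpowers hA, inferInstance⟩
end

section
/- Let ψ : X → X be a continuous map of a locally compact Hausdorff space with a fixed point z such that for every sufficiently small neighborhood U of z there exists K with ψᵏ(U) ⊂ U for all k ≥ K, and ψᵏ(x) → z for all x ∈ X. Then z is the unique fixed point of ψ, and for every compact set C ⊂ X and every neighborhood U of z there exists N with ψᵏ(C) ⊂ U for all k ≥ N. -/
open Filter Topology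

/-- A continuous contraction `ψ` towards a fixed point `z` (small neighborhoods of `z`
are eventually mapped into themselves, and all orbits converge to `z`) has `z` as its
unique fixed point, and its iterates converge to `z` uniformly on compact sets. -/
theorem stmt15 {X : Type*} [TopologicalSpace X] [LocallyCompactSpace X] [T2Space X]
    (ψ : X → X) (hψ : Continuous ψ) (z : X) (hz : ψ z = z)
    (hsmall : ∃ U₀ ∈ 𝓝 z, ∀ U ∈ 𝓝 z, U ⊆ U₀ → ∃ K : ℕ, ∀ k ≥ K, ψ^[k] '' U ⊆ U)
    (horb : ∀ x : X, Tendsto (fun k : ℕ => ψ^[k] x) atTop (𝓝 z)) :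
    (∀ x : X, ψ x = x → x = z) ∧
    (∀ C : Set X, IsCompact C → ∀ U ∈ 𝓝 z, ∃ N : ℕ, ∀ k ≥ N, ψ^[k] '' C ⊆ U) := by
  obtain ⟨U₀, hU₀, hsm⟩ := hsmall
  constructor
  · intro x hx
    have hfix : ∀ k, ψ^[k] x = x := by
      intro k
      induction k with
      | zero => simp
      | succ n ih => rw [Function.iterate_succ_apply', ih, hx]
    have h := horb x
    simp only [hfix] at h
    exact tendsto_nhds_unique tendsto_const_nhds h
  · intro C hC U hU
    set V := U ∩ U₀ with hVdef
    have hVnz : V ∈ 𝓝 z := Filter.inter_mem hU hU₀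
    obtain ⟨K, hK⟩ := hsm V hVnz Set.inter_subset_right
    have key : ∀ x ∈ C, ∃ n : ℕ, ∃ W : Set X, IsOpen W ∧ x ∈ W ∧
        ∀ y ∈ W, ∀ m ≥ n + K, ψ^[m] y ∈ V := by
      intro x _
      have hint : interior V ∈ 𝓝 z := interior_mem_nhds.2 hVnz
      have hev : ∀ᶠ k in atTop, ψ^[k] x ∈ interior V := (horb x).eventually_mem hint
      obtain ⟨n, hn⟩ := hev.exists
      refine ⟨n, (ψ^[n]) ⁻¹' interior V, isOpen_interior.preimage (hψ.iterate n), hn, ?_⟩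
      intro y hy m hm
      have h1 : m - n ≥ K := le_tsub_of_add_le_left hm
      have h2 : ψ^[m] y = ψ^[m - n] (ψ^[n] y) := by
        rw [← Function.iterate_add_apply, Nat.sub_add_cancel (le_trans (Nat.le_add_right n K) hm)]
      rw [h2]
      exact hK _ h1 ⟨ψ^[n] y, interior_subset hy, rfl⟩
    choose n W hWopen hxW hW using key
    obtain ⟨t, ht⟩ := hC.elim_nhds_subcover' (fun x hx => W x hx)
      (fun x hx => (hWopen x hx).mem_nhds (hxW x hx))
    refine ⟨(t.sup fun x => n x.1 x.2) + K, ?_⟩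
    rintro k hk _ ⟨c, hc, rfl⟩
    obtain ⟨x, hxt, hcx⟩ := Set.mem_iUnion₂.1 (ht hc)
    have hkx : k ≥ n x.1 x.2 + K :=
      le_trans (Nat.add_le_add_right (Finset.le_sup (f := fun x => n x.1 x.2) hxt) K) hk
    exact (hW x.1 x.2 c hcx k hkx).1
end
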